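/- Let β(t) be the trajectory of the reparametrized gradient flow with initialization w_+(0) = w_−(0) = ω_0 where all entries of ω_0 are nonzero, and let w_min := min_{j∈[d]} |ω_{0,j}|. Then for all t ≥ 0, (d/dt) L(β(t)) ≤ −(2 w_min²/n)·‖∇_β L(β(t))‖_2². In particular, the loss is nonincreasing along the flow. -/

import Mathlib

open Real Filter Finset

noncomputable section

namespace AttnGF

/-- Softmax of a vector in `ℝ^L`. -/
def S {L : ℕ} (u : Fin L → ℝ) (l : Fin L) : ℝ := Real.exp (u l) / ∑ j, Real.exp (u j)

/-- Euclidean norm of a vector. -/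
def l2 {d : ℕ} (x : Fin d → ℝ) : ℝ := Real.sqrt (∑ j, x j ^ 2)

/-- ℓ1 norm of a vector. -/
def l1 {d : ℕ} (x : Fin d → ℝ) : ℝ := ∑ j, |x j|

variable {n L d de : ℕ}

/-- Token scores γ_{il} = y_i v^⊤ x_{il}. -/
def gam (X : Fin n → Fin L → Fin d → ℝ) (y : Fin n → ℝ) (v : Fin d → ℝ)
    (i : Fin n) (l : Fin L) : ℝ := y i * ∑ j, v j * X i l j

/-- g_i(β) = X_i (β ⊙ z_i) for the diagonal attention model. -/
def gD (X : Fin n → Fin L → Fin d → ℝ) (z : Fin n → Fin d → ℝ) (i : Fin n)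
    (β : Fin d → ℝ) (l : Fin L) : ℝ := ∑ j, X i l j * (β j * z i j)

/-- Empirical exponential loss for the diagonal attention model. -/
def lossD (X : Fin n → Fin L → Fin d → ℝ) (z : Fin n → Fin d → ℝ)
    (y : Fin n → ℝ) (v : Fin d → ℝ) (β : Fin d → ℝ) : ℝ :=
  (1 / (n : ℝ)) * ∑ i, Real.exp (-(∑ l, gam X y v i l * S (gD X z i β) l))

/-- Constraint vectors B_{il} = z_i ⊙ (x_{i,opt(i)} − x_{il}). -/
def Bv (X : Fin n → Fin L → Fin d → ℝ) (z : Fin n → Fin d → ℝ)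
    (opt : Fin n → Fin L) (i : Fin n) (l : Fin L) (j : Fin d) : ℝ :=
  z i j * (X i (opt i) j - X i l j)

/-- (Σ(u) γ)_l where Σ(u) = Diag(S(u)) − S(u) S(u)^⊤. -/
def SigMul {L : ℕ} (u γv : Fin L → ℝ) (l : Fin L) : ℝ :=
  S u l * γv l - S u l * ∑ j, S u j * γv j

/-- j-th component of the gradient (partial derivative) of f at x. -/
def pD {d : ℕ} (f : (Fin d → ℝ) → ℝ) (x : Fin d → ℝ) (j : Fin d) : ℝ :=
  fderiv ℝ f x (Pi.single j 1)

/-- Assumption A1. -/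
def A1 (X : Fin n → Fin L → Fin d → ℝ) (y : Fin n → ℝ) (v : Fin d → ℝ)
    (opt : Fin n → Fin L) (nopt : Fin n → ℝ) : Prop :=
  ∀ i : Fin n, ∀ l : Fin L, l ≠ opt i →
    gam X y v i l < gam X y v i (opt i) ∧ gam X y v i l = nopt i

/-- Feasibility for the ℓ1-SVM. -/
def Feas (X : Fin n → Fin L → Fin d → ℝ) (z : Fin n → Fin d → ℝ)
    (opt : Fin n → Fin L) (βf : Fin d → ℝ) : Prop :=
  ∀ i : Fin n, ∀ l : Fin L, l ≠ opt i → 1 ≤ ∑ j, βf j * Bv X z opt i l j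

/-- Reparametrized gradient flow on (w₊, w₋). -/
def Flow (X : Fin n → Fin L → Fin d → ℝ) (z : Fin n → Fin d → ℝ)
    (y : Fin n → ℝ) (v : Fin d → ℝ) (wp wm : ℝ → Fin d → ℝ) : Prop :=
  ∀ t : ℝ, 0 ≤ t → ∀ j : Fin d,
    HasDerivAt (fun s => wp s j)
      (-(pD (fun u => lossD X z y v (fun k => (u k ^ 2 - wm t k ^ 2) / 2)) (wp t) j)) t ∧
    HasDerivAt (fun s => wm s j)
      (-(pD (fun u => lossD X z y v (fun k => (wp t k ^ 2 - u k ^ 2) / 2)) (wm t) j)) t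

/-- β(t) = (w₊(t)^{⊙2} − w₋(t)^{⊙2})/2. -/
def bCurve (wp wm : ℝ → Fin d → ℝ) (t : ℝ) (j : Fin d) : ℝ :=
  (wp t j ^ 2 - wm t j ^ 2) / 2

/-- Assumption A2 (initial loss bound). -/
def A2 (X : Fin n → Fin L → Fin d → ℝ) (z : Fin n → Fin d → ℝ)
    (y : Fin n → ℝ) (v : Fin d → ℝ) (opt : Fin n → Fin L) (nopt : Fin n → ℝ)
    (β0 : Fin d → ℝ) : Prop :=
  ∀ jj : Fin n, lossD X z y v β0 ≤
    (Real.exp (-(nopt jj)) +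
      ∑ i ∈ Finset.univ.erase jj, Real.exp (-(gam X y v i (opt i)))) / (n : ℝ)

/-- Margin μ(β) = min_{i, l ≠ opt(i)} β^⊤ B_{il}. -/
def margin (X : Fin n → Fin L → Fin d → ℝ) (z : Fin n → Fin d → ℝ)
    (opt : Fin n → Fin L) (β : Fin d → ℝ) : ℝ :=
  sInf {m : ℝ | ∃ i : Fin n, ∃ l : Fin L, l ≠ opt i ∧ m = ∑ j, β j * Bv X z opt i l j}

/-- φ_{il}(t). -/
def phi (X : Fin n → Fin L → Fin d → ℝ) (z : Fin n → Fin d → ℝ)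
    (y : Fin n → ℝ) (v : Fin d → ℝ) (β : ℝ → Fin d → ℝ) (i : Fin n) (l : Fin L)
    (t : ℝ) : ℝ :=
  -(2 / (n : ℝ)) * ∫ τ in (0:ℝ)..t,
    Real.exp (-(∑ l', gam X y v i l' * S (gD X z i (β τ)) l')) *
      SigMul (gD X z i (β τ)) (gam X y v i) l

/-- Dual variables λ_{il}(t) = φ_{il}(t) / ln μ(β(t)). -/
def lam (X : Fin n → Fin L → Fin d → ℝ) (z : Fin n → Fin d → ℝ)
    (y : Fin n → ℝ) (v : Fin d → ℝ) (opt : Fin n → Fin L) (β : ℝ → Fin d → ℝ)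
    (i : Fin n) (l : Fin L) (t : ℝ) : ℝ :=
  (1 / Real.log (margin X z opt (β t))) * phi X z y v β i l t

/-- g_i(K,Q) = X_i K Q^⊤ z_i for the full attention model. -/
def gM (X : Fin n → Fin L → Fin d → ℝ) (z : Fin n → Fin d → ℝ) (i : Fin n)
    (K Q : Fin d → Fin de → ℝ) (l : Fin L) : ℝ :=
  ∑ a, ∑ b, ∑ c, X i l a * K a b * Q c b * z i c

/-- Empirical exponential loss for the full attention model. -/
def lossM (X : Fin n → Fin L → Fin d → ℝ) (z : Fin n → Fin d → ℝ)
    (y : Fin n → ℝ) (v : Fin d → ℝ) (K Q : Fin d → Fin de → ℝ) : ℝ :=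
  (1 / (n : ℝ)) * ∑ i, Real.exp (-(∑ l, gam X y v i l * S (gM X z i K Q) l))

/-- Partial derivative of f with respect to the (a,b) entry of a matrix. -/
def pDM {d de : ℕ} (f : (Fin d → Fin de → ℝ) → ℝ) (M : Fin d → Fin de → ℝ)
    (a : Fin d) (b : Fin de) : ℝ :=
  fderiv ℝ f M (Pi.single a (Pi.single b 1))

/-- Gradient flow on the key and query matrices. -/
def MFlow (X : Fin n → Fin L → Fin d → ℝ) (z : Fin n → Fin d → ℝ)
    (y : Fin n → ℝ) (v : Fin d → ℝ) (K Q : ℝ → Fin d → Fin de → ℝ) : Prop :=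
  ∀ t : ℝ, 0 ≤ t → ∀ (a : Fin d) (b : Fin de),
    HasDerivAt (fun s => K s a b) (-(pDM (fun M => lossM X z y v M (Q t)) (K t) a b)) t ∧
    HasDerivAt (fun s => Q s a b) (-(pDM (fun M => lossM X z y v (K t) M) (Q t) a b)) t

/-- A rectangular matrix is diagonal: zero off the main diagonal. -/
def RectDiag {d de : ℕ} (M : Fin d → Fin de → ℝ) : Prop :=
  ∀ (a : Fin d) (b : Fin de), (a : ℕ) ≠ (b : ℕ) → M a b = 0

/-- Orthogonality: U^⊤ U = 1. -/
def Orth {d : ℕ} (U : Fin d → Fin d → ℝ) : Prop :=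
  ∀ j j' : Fin d, ∑ a, U a j * U a j' = (if j = j' then (1:ℝ) else 0)

/-- Assumption B1, with the pairing of non-optimal tokens given by the involution σ. -/
def B1 (X : Fin n → Fin L → Fin d → ℝ) (z : Fin n → Fin d → ℝ)
    (opt : Fin n → Fin L) (σ : Fin n → Fin L → Fin L) : Prop :=
  (∀ i j : Fin n, i ≠ j →
    (∑ a, X i (opt i) a * X j (opt j) a = 0) ∧ (∑ a, z i a * z j a = 0)) ∧
  (∀ i, |∑ a, X i (opt i) a * z i a| = l2 (X i (opt i)) * l2 (z i)) ∧
  (∀ i, ∀ l, l ≠ opt i → σ i l ≠ opt i ∧ σ i l ≠ l ∧ σ i (σ i l) = l ∧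
    ∃ c : ℝ, -1 ≤ c ∧ c < 1 ∧
      (∑ a, X i (opt i) a * (X i l a - X i (σ i l) a)) = 0 ∧
      (∀ a, X i l a + X i (σ i l) a = 2 * c * X i (opt i) a))

/-- Rotated constraint vectors B̃_{il}. -/
def Btil (X : Fin n → Fin L → Fin d → ℝ) (z : Fin n → Fin d → ℝ)
    (opt : Fin n → Fin L) (pim : Fin n → Fin d) (i : Fin n) (l : Fin L) (j : Fin d) : ℝ :=
  Real.sign (∑ a, X i (opt i) a * z i a) * (∑ a, (X i (opt i) a - X i l a) * z i a) *
    (if j = pim i then 1 else 0)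

/-- Margin with respect to the rotated constraints. -/
def marginB (X : Fin n → Fin L → Fin d → ℝ) (z : Fin n → Fin d → ℝ)
    (opt : Fin n → Fin L) (pim : Fin n → Fin d) (β : Fin d → ℝ) : ℝ :=
  sInf {m : ℝ | ∃ i : Fin n, ∃ l : Fin L, l ≠ opt i ∧ m = ∑ j, β j * Btil X z opt pim i l j}

/-- Margin for a combined attention weight matrix. -/
def marginM (X : Fin n → Fin L → Fin d → ℝ) (z : Fin n → Fin d → ℝ)
    (opt : Fin n → Fin L) (W : Fin d → Fin d → ℝ) : ℝ :=
  sInf {m : ℝ | ∃ i : Fin n, ∃ l : Fin L, l ≠ opt i ∧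
    m = ∑ a, ∑ c, (X i (opt i) a - X i l a) * W a c * z i c}

/-- Nuclear norm ‖W‖_* = trace((W^⊤W)^{1/2}). -/
def nuclear {d : ℕ} (W : Matrix (Fin d) (Fin d) ℝ) : ℝ :=
  ((Matrix.posSemidef_conjTranspose_mul_self W).1.eigenvectorUnitary.1 *
    Matrix.diagonal (Real.sqrt ∘ (Matrix.posSemidef_conjTranspose_mul_self W).1.eigenvalues) *
    (star (Matrix.posSemidef_conjTranspose_mul_self W).1.eigenvectorUnitary :
      Matrix (Fin d) (Fin d) ℝ)).trace

end AttnGF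

/-!
Along the flow `ẇ₊ = -∇L(β) ⊙ w₊` and `ẇ₋ = ∇L(β) ⊙ w₋`, so `w₊ ⊙ w₋` is conserved and equals
`ω₀ ⊙ ω₀`, while `β̇ = -∇L(β) ⊙ (w₊² + w₋²)`. Hence `d/dt L(β) = -∑ⱼ (w₊ⱼ² + w₋ⱼ²) (∂ⱼL)²`, and
`w₊ⱼ² + w₋ⱼ² ≥ 2 w₊ⱼ w₋ⱼ = 2 ω₀ⱼ² ≥ 2 w_min²`.
-/

namespace AttnGF

section PartialDerivatives

variable {d : ℕ} {F : (Fin d → ℝ) → ℝ}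

theorem pD_comp_coordwise {f : Fin d → ℝ → ℝ} {f' a : Fin d → ℝ}
    (hF : DifferentiableAt ℝ F (fun k => f k (a k))) (hf : ∀ k, HasDerivAt (f k) (f' k) (a k))
    (j : Fin d) :
    pD (fun u => F (fun k => f k (u k))) a j = f' j * pD F (fun k => f k (a k)) j := by
  have hφ : HasFDerivAt (fun u k => f k (u k))
      (ContinuousLinearMap.pi fun k => f' k • ContinuousLinearMap.proj k) a :=
    hasFDerivAt_pi.2 fun k =>
      (hf k).comp_hasFDerivAt a (hasFDerivAt_apply (𝕜 := ℝ) (F' := fun _ : Fin d => ℝ) k a)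
  have hdir : (ContinuousLinearMap.pi fun k =>
      f' k • ContinuousLinearMap.proj (R := ℝ) (φ := fun _ : Fin d => ℝ) k)
      (Pi.single j 1) = f' j • Pi.single j (1 : ℝ) := by
    ext k
    by_cases hk : k = j <;> simp [hk]
  have hcomp : HasFDerivAt (fun u => F fun k => f k (u k)) _ a := hF.hasFDerivAt.comp a hφ
  rw [pD, hcomp.fderiv, ContinuousLinearMap.comp_apply, hdir, map_smul, smul_eq_mul, pD]

theorem hasDerivAt_comp_eq_sum_pD {γ : ℝ → Fin d → ℝ} {γ' : Fin d → ℝ} {t : ℝ}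
    (hF : DifferentiableAt ℝ F (γ t)) (hγ : HasDerivAt γ γ' t) :
    HasDerivAt (fun s => F (γ s)) (∑ j, γ' j * pD F (γ t) j) t := by
  have hsum : fderiv ℝ F (γ t) γ' = ∑ j, γ' j * pD F (γ t) j := by
    conv_lhs => rw [← Finset.univ_sum_single γ']
    refine (map_sum _ _ _).trans (Finset.sum_congr rfl fun j _ => ?_)
    rw [pD, ← smul_eq_mul, ← map_smul, ← Pi.single_smul', smul_eq_mul, mul_one]
  exact hsum ▸ hF.hasFDerivAt.comp_hasDerivAt t hγ

end PartialDerivatives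

@[fun_prop]
theorem differentiable_S {L : ℕ} (l : Fin L) : Differentiable ℝ (fun u : Fin L → ℝ => S u l) := by
  simp only [S, div_eq_mul_inv]
  exact (by fun_prop : Differentiable ℝ fun u : Fin L → ℝ => exp (u l)).mul <|
    Differentiable.inv (by fun_prop)
      fun _ => (Finset.sum_pos (fun _ _ => exp_pos _) ⟨l, mem_univ l⟩).ne'

@[fun_prop]
theorem differentiable_gD {n L d : ℕ} (X : Fin n → Fin L → Fin d → ℝ) (z : Fin n → Fin d → ℝ)
    (i : Fin n) : Differentiable ℝ (gD X z i) := by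
  unfold gD; fun_prop

theorem differentiable_lossD {n L d : ℕ} (X : Fin n → Fin L → Fin d → ℝ)
    (z : Fin n → Fin d → ℝ) (y : Fin n → ℝ) (v : Fin d → ℝ) :
    Differentiable ℝ (lossD X z y v) := by
  unfold lossD; fun_prop

theorem mul_eq_of_hasDerivAt_opposite {p m g : ℝ → ℝ} {T : ℝ} (hT : 0 ≤ T)
    (hp : ∀ t, 0 ≤ t → HasDerivAt p (-(g t * p t)) t)
    (hm : ∀ t, 0 ≤ t → HasDerivAt m (g t * m t) t) :
    p T * m T = p 0 * m 0 := by
  have hpm : ∀ t, 0 ≤ t → HasDerivAt (fun s => p s * m s) 0 t := fun t ht =>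
    ((hp t ht).fun_mul (hm t ht)).congr_deriv (by ring)
  exact constant_of_has_deriv_right_zero
    (fun t ht => (hpm t ht.1).continuousAt.continuousWithinAt)
    (fun t ht => (hpm t ht.1).hasDerivWithinAt) T ⟨hT, le_rfl⟩

theorem sq_sInf_abs_le {d : ℕ} (ω : Fin d → ℝ) (j : Fin d) :
    sInf {x : ℝ | ∃ k, x = |ω k|} ^ 2 ≤ ω j ^ 2 := by
  have hlb : ∀ x ∈ {x : ℝ | ∃ k, x = |ω k|}, 0 ≤ x := by
    rintro x ⟨k, rfl⟩
    exact abs_nonneg _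
  have hj : |ω j| ∈ {x : ℝ | ∃ k, x = |ω k|} := ⟨j, rfl⟩
  rw [← sq_abs (ω j)]
  exact pow_le_pow_left₀ (le_csInf ⟨_, hj⟩ hlb) (csInf_le ⟨0, hlb⟩ hj) 2

namespace Flow

variable {n L d : ℕ} {X : Fin n → Fin L → Fin d → ℝ} {z : Fin n → Fin d → ℝ} {y : Fin n → ℝ}
  {v : Fin d → ℝ} {wp wm : ℝ → Fin d → ℝ}

theorem hasDerivAt_wp (hflow : Flow X z y v wp wm) {t : ℝ} (ht : 0 ≤ t) (j : Fin d) :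
    HasDerivAt (fun s => wp s j) (-(pD (lossD X z y v) (bCurve wp wm t) j * wp t j)) t :=
  (hflow t ht j).1.congr_deriv <| by
    rw [pD_comp_coordwise (f := fun k x => (x ^ 2 - wm t k ^ 2) / 2) (f' := wp t)
      (differentiable_lossD X z y v _)
      fun k => (((hasDerivAt_pow 2 (wp t k)).sub_const _).div_const 2).congr_deriv (by ring),
      mul_comm]
    rfl

theorem hasDerivAt_wm (hflow : Flow X z y v wp wm) {t : ℝ} (ht : 0 ≤ t) (j : Fin d) :
    HasDerivAt (fun s => wm s j) (pD (lossD X z y v) (bCurve wp wm t) j * wm t j) t :=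
  (hflow t ht j).2.congr_deriv <| by
    rw [pD_comp_coordwise (f := fun k x => (wp t k ^ 2 - x ^ 2) / 2) (f' := fun k => -wm t k)
      (differentiable_lossD X z y v _)
      fun k => (((hasDerivAt_pow 2 (wm t k)).const_sub _).div_const 2).congr_deriv (by ring),
      neg_mul, neg_neg, mul_comm]
    rfl

theorem wp_mul_wm (hflow : Flow X z y v wp wm) {t : ℝ} (ht : 0 ≤ t) (j : Fin d) :
    wp t j * wm t j = wp 0 j * wm 0 j :=
  mul_eq_of_hasDerivAt_opposite ht (fun _ hs => hflow.hasDerivAt_wp hs j)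
    (fun _ hs => hflow.hasDerivAt_wm hs j)

theorem hasDerivAt_lossD (hflow : Flow X z y v wp wm) {t : ℝ} (ht : 0 ≤ t) :
    HasDerivAt (fun s => lossD X z y v (bCurve wp wm s))
      (-∑ j, (wp t j ^ 2 + wm t j ^ 2) * pD (lossD X z y v) (bCurve wp wm t) j ^ 2) t := by
  have hβ : HasDerivAt (bCurve wp wm)
      (fun j => -((wp t j ^ 2 + wm t j ^ 2) * pD (lossD X z y v) (bCurve wp wm t) j)) t :=
    hasDerivAt_pi.2 fun j => ((((hflow.hasDerivAt_wp ht j).fun_pow 2).sub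
      ((hflow.hasDerivAt_wm ht j).fun_pow 2)).div_const 2).congr_deriv (by ring)
  refine (hasDerivAt_comp_eq_sum_pD (differentiable_lossD X z y v _) hβ).congr_deriv ?_
  rw [← sum_neg_distrib]
  exact sum_congr rfl fun j _ => by ring

theorem antitoneOn_lossD (hflow : Flow X z y v wp wm) :
    AntitoneOn (fun s => lossD X z y v (bCurve wp wm s)) (Set.Ici 0) := by
  refine antitoneOn_of_hasDerivWithinAt_nonpos (convex_Ici 0)
    (fun t ht => (hflow.hasDerivAt_lossD ht).continuousAt.continuousWithinAt)
    (fun t ht => (hflow.hasDerivAt_lossD (interior_subset ht)).hasDerivWithinAt) fun t _ => ?_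
  exact neg_nonpos.2 (sum_nonneg fun j _ => by positivity)

end Flow

theorem statement8_general {n L d : ℕ}
    (X : Fin n → Fin L → Fin d → ℝ) (z : Fin n → Fin d → ℝ)
    (y : Fin n → ℝ) (v : Fin d → ℝ)
    (wp wm : ℝ → Fin d → ℝ) (hflow : Flow X z y v wp wm)
    (ω0 : Fin d → ℝ)
    (hip : wp 0 = ω0) (him : wm 0 = ω0)
    (wmin : ℝ) (hwmin : wmin = sInf {x : ℝ | ∃ j : Fin d, x = |ω0 j|}) :
    (∀ t : ℝ, 0 ≤ t →
      deriv (fun s => lossD X z y v (bCurve wp wm s)) t ≤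
        -(2 * wmin ^ 2 / (n : ℝ)) *
          ∑ j, (pD (lossD X z y v) (bCurve wp wm t) j) ^ 2) ∧
    (∀ s₁ s₂ : ℝ, 0 ≤ s₁ → s₁ ≤ s₂ →
      lossD X z y v (bCurve wp wm s₂) ≤ lossD X z y v (bCurve wp wm s₁)) := by
  refine ⟨fun t ht => ?_, fun s₁ s₂ h₁ h₁₂ => hflow.antitoneOn_lossD h₁ (h₁.trans h₁₂) h₁₂⟩
  have hcoef : ∀ j, 2 * wmin ^ 2 / n ≤ wp t j ^ 2 + wm t j ^ 2 := fun j =>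
    calc 2 * wmin ^ 2 / n ≤ 2 * wmin ^ 2 := div_nat_le_self_of_nonnneg (by positivity) n
      _ ≤ 2 * (wp t j * wm t j) := by
        rw [hflow.wp_mul_wm ht, hip, him, ← sq, hwmin]
        exact mul_le_mul_of_nonneg_left (sq_sInf_abs_le ω0 j) zero_le_two
      _ ≤ wp t j ^ 2 + wm t j ^ 2 := by
        rw [← mul_assoc]
        exact two_mul_le_add_sq _ _
  rw [(hflow.hasDerivAt_lossD ht).deriv, neg_mul, neg_le_neg_iff, mul_sum]
  exact sum_le_sum fun j _ => mul_le_mul_of_nonneg_right (hcoef j) (sq_nonneg _)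

/-- descent inequality for the loss along the flow; the loss is nonincreasing. -/
theorem statement8 {n L d : ℕ}
    (X : Fin n → Fin L → Fin d → ℝ) (z : Fin n → Fin d → ℝ)
    (y : Fin n → ℝ) (v : Fin d → ℝ)
    (wp wm : ℝ → Fin d → ℝ) (hflow : Flow X z y v wp wm)
    (ω0 : Fin d → ℝ) (hω : ∀ j, ω0 j ≠ 0)
    (hip : wp 0 = ω0) (him : wm 0 = ω0)
    (wmin : ℝ) (hwmin : wmin = sInf {x : ℝ | ∃ j : Fin d, x = |ω0 j|}) :
    (∀ t : ℝ, 0 ≤ t →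
      deriv (fun s => lossD X z y v (bCurve wp wm s)) t ≤
        -(2 * wmin ^ 2 / (n : ℝ)) *
          ∑ j, (pD (lossD X z y v) (bCurve wp wm t) j) ^ 2) ∧
    (∀ s₁ s₂ : ℝ, 0 ≤ s₁ → s₁ ≤ s₂ →
      lossD X z y v (bCurve wp wm s₂) ≤ lossD X z y v (bCurve wp wm s₁)) :=
  statement8_general X z y v wp wm hflow ω0 hip him wmin hwmin

end AttnGF
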